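/- If two binary words w₁, w₂ ∈ {0,1}ⁿ of the same length are cyclically equalizable, then their Hamming weights are equal: wt(w₁) = wt(w₂). -/

import Mathlib

/-- Two words of the same length are *cyclically equal* if one is obtained from the
other by a cyclic shift of positions: there is an integer `δ` such that the `j`-th
letter of `w₂` equals the `((j + δ) mod n)`-th letter of `w₁`. -/
def CyclicallyEqual {α : Type*} (w₁ w₂ : List α) : Prop :=
  w₁.length = w₂.length ∧
    ∃ δ : ℤ, ∀ j : ℕ, j < w₂.length →
      w₂[j]? = w₁[(((j : ℤ) + δ) % (w₁.length : ℤ)).toNat]?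

/-- `riffle w us = u₀ a₀ u₁ a₁ ⋯ u_{n-1} a_{n-1} u_n ⋯`, interleaving the words of
`us` with the letters of `w` (starting with `us.head`), and appending the remaining
words of `us` at the end. -/
def riffle {α : Type*} : List α → List (List α) → List α
  | [], us => us.flatten
  | a :: w, us => us.headD [] ++ a :: riffle w us.tail

/-- `InsertsTo Δ w w'` says that the family of words `w'` is obtained from the family
`w` by a simultaneous `Δ`-insertion: there are words `u₀, …, u_n` over `Δ` (where `n`
is the common length of the `w i`) such that each `w' i` is
`u₀ a_{i,0} u₁ a_{i,1} ⋯ u_{n-1} a_{i,n-1} u_n` where `w i = a_{i,0} ⋯ a_{i,n-1}`. -/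
def InsertsTo {α : Type*} (Δ : Set α) {k : ℕ} (w w' : Fin k → List α) : Prop :=
  ∃ us : List (List α),
    (∀ u ∈ us, ∀ c ∈ u, c ∈ Δ) ∧
    (∀ i, us.length = (w i).length + 1) ∧
    (∀ i, w' i = riffle (w i) us)

/-- A family of words is `Δ`-cyclically equalizable if some `Δ`-insertion transforms
them into pairwise cyclically equal words. -/
def CyclicallyEqualizable {α : Type*} (Δ : Set α) {k : ℕ} (w : Fin k → List α) : Prop :=
  ∃ w' : Fin k → List α, InsertsTo Δ w w' ∧ ∀ i j, CyclicallyEqual (w' i) (w' j)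


lemma count_riffle (w : List Bool) : ∀ us : List (List Bool),
    (riffle w us).count true = w.count true + (us.flatten).count true := by
  induction w with
  | nil => intro us; simp [riffle]
  | cons a w ih =>
    intro us
    cases us with
    | nil => simp [riffle, List.count_cons, ih]
    | cons u rest =>
      simp [riffle, List.count_append, List.count_cons, ih]
      ring

lemma count_of_cyclicallyEqual {v₁ v₂ : List Bool} (h : CyclicallyEqual v₁ v₂) :
    v₁.count true = v₂.count true := by
  obtain ⟨hlen, δ, hδ⟩ := h
  rcases Nat.eq_zero_or_pos v₁.length with h0 | hpos
  · simp [List.length_eq_zero_iff.mp h0, List.length_eq_zero_iff.mp (hlen ▸ h0)]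
  · set m : ℕ := (δ % (v₁.length : ℤ)).toNat with hm
    have hmδ : (m : ℤ) = δ % (v₁.length : ℤ) :=
      Int.toNat_of_nonneg (Int.emod_nonneg δ (by exact_mod_cast hpos.ne'))
    have hv : v₂ = v₁.rotate m := by
      apply List.ext_getElem?
      intro j
      rcases lt_or_ge j v₂.length with hj | hj
      · rw [hδ j hj, List.getElem?_rotate (hlen ▸ hj)]
        congr 1
        have key : ((j : ℤ) + δ) % (v₁.length : ℤ) = (((j + m) % v₁.length : ℕ) : ℤ) := by
          push_cast
          rw [Int.add_emod ((j:ℤ)) δ, Int.add_emod ((j:ℤ)) (m:ℤ), hmδ,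
            Int.emod_emod_of_dvd δ dvd_rfl]
        rw [key, Int.toNat_natCast]
      · rw [List.getElem?_eq_none hj, List.getElem?_eq_none (by simpa [hlen] using hj)]
    rw [hv]
    exact ((List.rotate_perm v₁ m).count_eq true).symm

/-- If two binary words of the same length are cyclically equalizable, then their
Hamming weights are equal. -/
theorem weight_eq_of_cyclically_equalizable
    (n : ℕ) (w₁ w₂ : List Bool) (h₁ : w₁.length = n) (h₂ : w₂.length = n)
    (h : CyclicallyEqualizable (Set.univ : Set Bool) ![w₁, w₂]) :
    w₁.count true = w₂.count true := by
  obtain ⟨w', ⟨us, -, -, hr⟩, hce⟩ := h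
  have e1 := hr 0
  have e2 := hr 1
  simp only [Matrix.cons_val_zero, Matrix.cons_val_one, Matrix.head_cons] at e1 e2
  have := count_of_cyclicallyEqual (hce 0 1)
  rw [e1, e2, count_riffle, count_riffle] at this
  omega
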